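/- Let the parameters take the original benchmark values a1 = 7/1000, a2 = 7/250, a3 = 7/200, a4 = 1/50, a5 = 1/25, a6 = 1/50, a7 = 1/25, b1 = -727/20000, b2 = 3273/100000, w1 = -3467/50000, w2 = -227/100000. Then the Andrews squeezing system has no singular points: there is no point x ∈ ℝ^14 with p(x) = 0 at which the 13×14 Jacobian matrix of p has rank strictly less than 13. -/

import Mathlib

/-!
Write `z_k = c_k + i s_k`. The constraints say that the tip `u = a1 z1 - a2 z1 z2` of the crank
satisfies `u + i a3 z3 = b`, `u + i a4 z4 z5 - a5 z5 = w` and `u - a6 z6 z7 + i a7 z7 = w`.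
At a singular point some `l ≠ 0` has `l ᵥ* Dp = 0`. Taking, in each column pair `(c_k, s_k)`,
the component along `i z_k` eliminates the circle multipliers: the multipliers of a dyad vanish
unless it is folded (`c4 = 0`, resp. `c6 = 0`), and then those of the crank vanish unless
`s2 = 0` and `z3 ⟂ z1`. For the benchmark values both exceptions are impossible: a folded dyad
puts `u` at distance `1/50` or `3/50` from `w`, which no point of the circle `|u - b| = 7/200`
in the annulus `21/1000 ≤ |u| ≤ 7/200` achieves, and a folded crank would force
`|b| ∈ {0, 14, 56, 70}/1000`.
-/

/-- The Jacobian matrix of a map `f : ℝ^n → ℝ^m` at a point `x`,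
whose `(i, j)` entry is the partial derivative of the `i`-th component of `f`
with respect to the `j`-th variable. -/
noncomputable def jacobian {n m : ℕ} (f : (Fin n → ℝ) → Fin m → ℝ) (x : Fin n → ℝ) :
    Matrix (Fin m) (Fin n) ℝ :=
  Matrix.of fun i j => fderiv ℝ (fun y => f y i) x (Pi.single j 1)

/-- The full constraint map `p : ℝ^14 → ℝ^13` of the Andrews squeezing mechanism,
in the variables `(c1, s1, c2, s2, c3, s3, c4, s4, c5, s5, c6, s6, c7, s7)`. -/
noncomputable def andrewsP (a1 a2 a3 a4 a5 a6 a7 b1 b2 w1 w2 : ℝ)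
    (x : Fin 14 → ℝ) : Fin 13 → ℝ :=
  ![a1 * x 0 - a2 * (x 0 * x 2 - x 1 * x 3) - a3 * x 5 - b1,
    a1 * x 1 - a2 * (x 1 * x 2 + x 0 * x 3) + a3 * x 4 - b2,
    a1 * x 0 - a2 * (x 0 * x 2 - x 1 * x 3) - a4 * (x 7 * x 8 + x 6 * x 9) - a5 * x 8 - w1,
    a1 * x 1 - a2 * (x 1 * x 2 + x 0 * x 3) + a4 * (x 6 * x 8 - x 7 * x 9) - a5 * x 9 - w2,
    a1 * x 0 - a2 * (x 0 * x 2 - x 1 * x 3) - a6 * (x 10 * x 12 - x 11 * x 13) - a7 * x 13 - w1,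
    a1 * x 1 - a2 * (x 1 * x 2 + x 0 * x 3) - a6 * (x 11 * x 12 + x 10 * x 13) + a7 * x 12 - w2,
    x 0 ^ 2 + x 1 ^ 2 - 1,
    x 2 ^ 2 + x 3 ^ 2 - 1,
    x 4 ^ 2 + x 5 ^ 2 - 1,
    x 6 ^ 2 + x 7 ^ 2 - 1,
    x 8 ^ 2 + x 9 ^ 2 - 1,
    x 10 ^ 2 + x 11 ^ 2 - 1,
    x 12 ^ 2 + x 13 ^ 2 - 1]

/-- A point `x ∈ ℝ^14` is a singular point of the Andrews constraint system if
`p(x) = 0` and the `13 × 14` Jacobian matrix of `p` at `x` has rank `< 13`. -/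
def IsSingularAndrews (a1 a2 a3 a4 a5 a6 a7 b1 b2 w1 w2 : ℝ) (x : Fin 14 → ℝ) : Prop :=
  andrewsP a1 a2 a3 a4 a5 a6 a7 b1 b2 w1 w2 x = 0 ∧
  (jacobian (andrewsP a1 a2 a3 a4 a5 a6 a7 b1 b2 w1 w2) x).rank < 13

open Matrix

theorem Matrix.exists_ne_zero_vecMul_eq_zero_of_rank_lt {m n K : Type*} [Field K] [Fintype m]
    [Fintype n] (M : Matrix m n K) (h : M.rank < Fintype.card m) : ∃ v ≠ 0, v ᵥ* M = 0 := by
  by_contra! hv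
  refine h.ne (LinearIndependent.rank_matrix (Fintype.linearIndependent_iff.mpr fun g hg => ?_))
  by_contra! hg0
  exact hv g (funext_iff.not.mpr (not_forall.mpr hg0)) (by rwa [vecMul_eq_sum])

theorem vecMul_jacobian_eq_fderiv_sum {m n : ℕ} (f : (Fin n → ℝ) → Fin m → ℝ) (x : Fin n → ℝ)
    (hf : ∀ i, DifferentiableAt ℝ (fun y => f y i) x) (l : Fin m → ℝ) :
    l ᵥ* jacobian f x = fun j => fderiv ℝ (fun y => ∑ i, l i * f y i) x (Pi.single j 1) := by
  ext j
  simp [vecMul, dotProduct, jacobian, fderiv_fun_sum fun i _ => (hf i).const_mul (l i),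
    fderiv_const_mul (hf _)]

set_option maxHeartbeats 400000 in
theorem vecMul_jacobian_andrewsP (a1 a2 a3 a4 a5 a6 a7 b1 b2 w1 w2 : ℝ) (x : Fin 14 → ℝ)
    (l : Fin 13 → ℝ) :
    l ᵥ* jacobian (andrewsP a1 a2 a3 a4 a5 a6 a7 b1 b2 w1 w2) x =
      ![(l 0 + l 2 + l 4) * (a1 - a2 * x 2) - (l 1 + l 3 + l 5) * a2 * x 3 + 2 * l 6 * x 0,
        (l 0 + l 2 + l 4) * a2 * x 3 + (l 1 + l 3 + l 5) * (a1 - a2 * x 2) + 2 * l 6 * x 1,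
        -a2 * ((l 0 + l 2 + l 4) * x 0 + (l 1 + l 3 + l 5) * x 1) + 2 * l 7 * x 2,
        a2 * ((l 0 + l 2 + l 4) * x 1 - (l 1 + l 3 + l 5) * x 0) + 2 * l 7 * x 3,
        a3 * l 1 + 2 * l 8 * x 4,
        -a3 * l 0 + 2 * l 8 * x 5,
        a4 * (l 3 * x 8 - l 2 * x 9) + 2 * l 9 * x 6,
        -a4 * (l 2 * x 8 + l 3 * x 9) + 2 * l 9 * x 7,
        -(a4 * x 7 + a5) * l 2 + a4 * x 6 * l 3 + 2 * l 10 * x 8,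
        -a4 * x 6 * l 2 - (a4 * x 7 + a5) * l 3 + 2 * l 10 * x 9,
        -a6 * (l 4 * x 12 + l 5 * x 13) + 2 * l 11 * x 10,
        a6 * (l 4 * x 13 - l 5 * x 12) + 2 * l 11 * x 11,
        -a6 * x 10 * l 4 + (a7 - a6 * x 11) * l 5 + 2 * l 12 * x 12,
        (a6 * x 11 - a7) * l 4 - a6 * x 10 * l 5 + 2 * l 12 * x 13] := by
  rw [vecMul_jacobian_eq_fderiv_sum _ _ fun i => by
    fin_cases i <;> simp [andrewsP] <;> fun_prop]
  ext j
  simp (disch := fun_prop) [Fin.sum_univ_succ, andrewsP, fderiv_fun_add, fderiv_fun_sub,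
    fderiv_fun_mul, fderiv_fun_pow, fderiv_apply]
  fin_cases j <;> simp <;> ring

section UnitCircle

variable {c s : ℝ}

theorem eq_zero_of_mul_eq_zero_of_sq_add_sq_eq_one {m : ℝ} (h : c ^ 2 + s ^ 2 = 1)
    (hc : m * c = 0) (hs : m * s = 0) : m = 0 := by
  linear_combination c * hc + s * hs - m * h

theorem eq_zero_of_dot_eq_zero_of_cross_eq_zero {p q : ℝ} (h : c ^ 2 + s ^ 2 = 1)
    (hdot : p * c + q * s = 0) (hcross : p * s - q * c = 0) : p = 0 ∧ q = 0 :=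
  ⟨by linear_combination c * hdot + s * hcross - p * h,
    by linear_combination s * hdot - c * hcross - q * h⟩

end UnitCircle

theorem two_link_reach_sq {p q c1 s1 c2 s2 : ℝ} (h1 : c1 ^ 2 + s1 ^ 2 = 1)
    (h2 : c2 ^ 2 + s2 ^ 2 = 1) :
    (p * c1 - q * (c1 * c2 - s1 * s2)) ^ 2 + (p * s1 - q * (s1 * c2 + c1 * s2)) ^ 2 =
      p ^ 2 + q ^ 2 - 2 * p * q * c2 := by
  linear_combination (p ^ 2 - 2 * p * q * c2 + q ^ 2 * (c2 ^ 2 + s2 ^ 2)) * h1 + q ^ 2 * h2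

theorem two_link_reach_sq_mem_Icc {p q c1 s1 c2 s2 : ℝ} (hpq : 0 ≤ p * q)
    (h1 : c1 ^ 2 + s1 ^ 2 = 1) (h2 : c2 ^ 2 + s2 ^ 2 = 1) :
    (p * c1 - q * (c1 * c2 - s1 * s2)) ^ 2 + (p * s1 - q * (s1 * c2 + c1 * s2)) ^ 2 ∈
      Set.Icc ((p - q) ^ 2) ((p + q) ^ 2) := by
  obtain ⟨hc2l, hc2u⟩ := abs_le.mp <| (sq_le_one_iff_abs_le_one c2).mp (by linarith [sq_nonneg s2])
  rw [two_link_reach_sq h1 h2]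
  constructor
  · nlinarith [mul_nonneg hpq (sub_nonneg.mpr hc2u)]
  · nlinarith [mul_nonneg hpq (neg_le_iff_add_nonneg.mp hc2l)]

theorem dyad_multipliers_eq_zero {a b c s c' s' l l' m m' : ℝ} (ha : a ≠ 0) (hb : b ≠ 0)
    (hc : c ≠ 0) (h : c ^ 2 + s ^ 2 = 1) (h' : c' ^ 2 + s' ^ 2 = 1)
    (k1 : a * (l' * c' - l * s') + 2 * m * c = 0) (k2 : -a * (l * c' + l' * s') + 2 * m * s = 0)
    (k3 : -(a * s + b) * l + a * c * l' + 2 * m' * c' = 0)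
    (k4 : -a * c * l - (a * s + b) * l' + 2 * m' * s' = 0) :
    l = 0 ∧ l' = 0 ∧ m = 0 ∧ m' = 0 := by
  have hcross : l * s' - l' * c' = 0 :=
    (mul_eq_zero_iff_left hb).mp (by linear_combination s * k1 - c * k2 - s' * k3 + c' * k4)
  have hdot : l * c' + l' * s' = 0 :=
    (mul_eq_zero_iff_left (mul_ne_zero ha hc)).mp
      (by linear_combination s * k1 - c * k2 + a * s * hcross)
  obtain ⟨rfl, rfl⟩ := eq_zero_of_dot_eq_zero_of_cross_eq_zero h' hdot hcross
  exact ⟨rfl, rfl,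
    eq_zero_of_mul_eq_zero_of_sq_add_sq_eq_one h (by linear_combination k1 / 2)
      (by linear_combination k2 / 2),
    eq_zero_of_mul_eq_zero_of_sq_add_sq_eq_one h' (by linear_combination k3 / 2)
      (by linear_combination k4 / 2)⟩

theorem crank_multipliers_eq_zero_or_folded {a1 a2 a3 c1 s1 c2 s2 c3 s3 l0 l1 m1 m2 m3 : ℝ}
    (ha1 : a1 ≠ 0) (ha2 : a2 ≠ 0) (ha3 : a3 ≠ 0) (h1 : c1 ^ 2 + s1 ^ 2 = 1)
    (h2 : c2 ^ 2 + s2 ^ 2 = 1) (h3 : c3 ^ 2 + s3 ^ 2 = 1)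
    (k1 : l0 * (a1 - a2 * c2) - l1 * a2 * s2 + 2 * m1 * c1 = 0)
    (k2 : l0 * a2 * s2 + l1 * (a1 - a2 * c2) + 2 * m1 * s1 = 0)
    (k3 : -a2 * (l0 * c1 + l1 * s1) + 2 * m2 * c2 = 0)
    (k4 : a2 * (l0 * s1 - l1 * c1) + 2 * m2 * s2 = 0)
    (k5 : a3 * l1 + 2 * m3 * c3 = 0) (k6 : -a3 * l0 + 2 * m3 * s3 = 0) :
    (l0 = 0 ∧ l1 = 0 ∧ m1 = 0 ∧ m2 = 0 ∧ m3 = 0) ∨ (s2 = 0 ∧ c1 * c3 + s1 * s3 = 0) := by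
  have hcross : l0 * s1 - l1 * c1 = 0 :=
    (mul_eq_zero_iff_left ha1).mp (by linear_combination s1 * k1 - c1 * k2 - s2 * k3 + c2 * k4)
  have hs2dot : s2 * (l0 * c1 + l1 * s1) = 0 :=
    (mul_eq_zero_iff_left ha2).mp (by linear_combination c2 * k4 - s2 * k3 - a2 * c2 * hcross)
  have hperp : l0 * c3 + l1 * s3 = 0 :=
    (mul_eq_zero_iff_left ha3).mp (by linear_combination s3 * k5 - c3 * k6)
  by_cases hl : l0 = 0 ∧ l1 = 0
  · obtain ⟨rfl, rfl⟩ := hl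
    refine Or.inl ⟨rfl, rfl, ?_, ?_, ?_⟩
    · exact eq_zero_of_mul_eq_zero_of_sq_add_sq_eq_one h1 (by linear_combination k1 / 2)
        (by linear_combination k2 / 2)
    · exact eq_zero_of_mul_eq_zero_of_sq_add_sq_eq_one h2 (by linear_combination k3 / 2)
        (by linear_combination k4 / 2)
    · exact eq_zero_of_mul_eq_zero_of_sq_add_sq_eq_one h3 (by linear_combination k5 / 2)
        (by linear_combination k6 / 2)
  · have hdot : l0 * c1 + l1 * s1 ≠ 0 := fun h0 =>
      hl (eq_zero_of_dot_eq_zero_of_cross_eq_zero h1 h0 hcross)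
    refine Or.inr ⟨(mul_eq_zero.mp hs2dot).resolve_right hdot, ?_⟩
    by_contra hz
    -- `(l0, l1)` is parallel to `z1` and orthogonal to `z3`
    exact hl ⟨(mul_eq_zero_iff_right hz).mp (by linear_combination c1 * hperp + s3 * hcross),
      (mul_eq_zero_iff_right hz).mp (by linear_combination s1 * hperp - c3 * hcross)⟩

theorem folded_crank_reach_sq {a1 a2 a3 b1 b2 c1 s1 c2 s2 c3 s3 : ℝ} (h1 : c1 ^ 2 + s1 ^ 2 = 1)
    (h3 : c3 ^ 2 + s3 ^ 2 = 1) (hs2 : s2 = 0) (hperp : c1 * c3 + s1 * s3 = 0)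
    (e1 : a1 * c1 - a2 * (c1 * c2 - s1 * s2) - a3 * s3 = b1)
    (e2 : a1 * s1 - a2 * (s1 * c2 + c1 * s2) + a3 * c3 = b2) :
    (b1 ^ 2 + b2 ^ 2 - (a1 - a2 * c2) ^ 2 - a3 ^ 2) ^ 2 = (2 * (a1 - a2 * c2) * a3) ^ 2 := by
  have ht : (c1 * s3 - s1 * c3) ^ 2 = 1 := by
    linear_combination (c3 ^ 2 + s3 ^ 2) * h1 + h3 - (c1 * c3 + s1 * s3) * hperp
  have hb : b1 ^ 2 + b2 ^ 2 - (a1 - a2 * c2) ^ 2 - a3 ^ 2 =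
      -2 * (a1 - a2 * c2) * a3 * (c1 * s3 - s1 * c3) := by
    subst hs2 e1 e2
    linear_combination (a1 - a2 * c2) ^ 2 * h1 + a3 ^ 2 * h3
  rw [hb]
  linear_combination (2 * (a1 - a2 * c2) * a3) ^ 2 * ht

local notation "benchmarkP" => andrewsP (7/1000) (7/250) (7/200) (1/50) (1/25) (1/50) (1/25)
  (-727/20000) (3273/100000) (-3467/50000) (-227/100000)

theorem benchmark_not_folded_dyad_reach {u1 u2 σ : ℝ} (hσ : σ = 1 ∨ σ = -1)
    (hu : u1 ^ 2 + u2 ^ 2 ∈ Set.Icc ((7/1000 - 7/250) ^ 2) ((7/1000 + 7/250) ^ 2))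
    (hb : (u1 + 727/20000) ^ 2 + (u2 - 3273/100000) ^ 2 = (7/200) ^ 2)
    (hw : (u1 + 3467/50000) ^ 2 + (u2 + 227/100000) ^ 2 =
      (1/25) ^ 2 + (1/50) ^ 2 - 2 * (1/25) * (1/50) * σ) : False := by
  obtain ⟨hlow, hupp⟩ := hu
  -- the coordinate of `u` across the line of centres `w - b = -(3299/100000, 7/200)`
  rcases hσ with rfl | rfl <;> nlinarith [sq_nonneg (-7/200 * u1 + 3299/100000 * u2)]

theorem benchmark_dyads_unfolded (x : Fin 14 → ℝ) (hp : benchmarkP x = 0) :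
    x 6 ≠ 0 ∧ x 10 ≠ 0 := by
  simp only [andrewsP, cons_eq_zero_iff, sub_eq_zero] at hp
  obtain ⟨e1, e2, e3, e4, e5, e6, h1, h2, h3, h4, h5, h6, h7, -⟩ := hp
  set u1 := 7/1000 * x 0 - 7/250 * (x 0 * x 2 - x 1 * x 3)
  set u2 := 7/1000 * x 1 - 7/250 * (x 1 * x 2 + x 0 * x 3)
  have hu : u1 ^ 2 + u2 ^ 2 ∈ Set.Icc ((7/1000 - 7/250) ^ 2) ((7/1000 + 7/250) ^ 2) :=
    two_link_reach_sq_mem_Icc (by norm_num) h1 h2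
  have hb : (u1 + 727/20000) ^ 2 + (u2 - 3273/100000) ^ 2 = (7/200) ^ 2 := by
    rw [show u1 + 727/20000 = 7/200 * x 5 by linear_combination e1,
      show u2 - 3273/100000 = -(7/200 * x 4) by linear_combination e2]
    linear_combination (7/200) ^ 2 * h3
  -- in both cases `u - w` is a two-link arm with links `1/25`, `1/50` and joint cosine `σ`
  constructor
  · intro hc4
    refine benchmark_not_folded_dyad_reach (σ := -x 7) ?_ hu hb ?_
    · simpa [hc4, neg_eq_iff_eq_neg, or_comm] using h4
    rw [show u1 + 3467/50000 = 1/25 * x 8 - 1/50 * (x 8 * -x 7 - x 9 * x 6) by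
        linear_combination e3,
      show u2 + 227/100000 = 1/25 * x 9 - 1/50 * (x 9 * -x 7 + x 8 * x 6) by
        linear_combination e4]
    exact two_link_reach_sq h5 (by linear_combination h4)
  · intro hc6
    refine benchmark_not_folded_dyad_reach (σ := x 11) ?_ hu hb ?_
    · simpa [hc6] using h6
    rw [show u1 + 3467/50000 = 1/25 * x 13 - 1/50 * (x 13 * x 11 - -x 12 * -x 10) by
        linear_combination e5,
      show u2 + 227/100000 = 1/25 * -x 12 - 1/50 * (-x 12 * x 11 + x 13 * -x 10) by
        linear_combination e6]
    exact two_link_reach_sq (by linear_combination h7) (by linear_combination h6)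

theorem benchmark_multipliers_eq_zero (x : Fin 14 → ℝ) (l : Fin 13 → ℝ)
    (hp : benchmarkP x = 0) (hl : l ᵥ* jacobian benchmarkP x = 0) : l = 0 := by
  obtain ⟨hc4, hc6⟩ := benchmark_dyads_unfolded x hp
  simp only [andrewsP, cons_eq_zero_iff, sub_eq_zero] at hp
  obtain ⟨e1, e2, -, -, -, -, h1, h2, h3, h4, h5, h6, h7, -⟩ := hp
  rw [vecMul_jacobian_andrewsP] at hl
  simp only [cons_eq_zero_iff] at hl
  obtain ⟨k1, k2, k3, k4, k5, k6, k7, k8, k9, k10, k11, k12, k13, k14, -⟩ := hl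
  obtain ⟨hl2, hl3, hl9, hl10⟩ :=
    dyad_multipliers_eq_zero (by norm_num) (by norm_num) hc4 h4 h5 k7 k8 k9 k10
  -- the second dyad is the first one turned by a quarter turn, with `a5` replaced by `-a7`
  obtain ⟨hl5, hl4, hl11, hl12⟩ :=
    dyad_multipliers_eq_zero (a := 1/50) (b := -(1/25)) (c' := x 12) (s' := x 13) (l := l 5)
      (l' := -l 4) (m := l 11) (m' := l 12) (by norm_num) (by norm_num) hc6 h6 h7
      (by linear_combination k11) (by linear_combination k12) (by linear_combination k13)
      (by linear_combination k14)
  rw [neg_eq_zero] at hl4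
  simp only [hl2, hl3, hl4, hl5, add_zero] at k1 k2 k3 k4
  rcases crank_multipliers_eq_zero_or_folded (by norm_num) (by norm_num) (by norm_num) h1 h2 h3
    k1 k2 k3 k4 k5 k6 with ⟨hl0, hl1, hl6, hl7, hl8⟩ | ⟨hs2, hperp⟩
  · funext i
    fin_cases i <;> assumption
  · have hreach := folded_crank_reach_sq h1 h3 hs2 hperp e1 e2
    have hc2 : x 2 = 1 ∨ x 2 = -1 := by simpa [hs2] using h2
    rcases hc2 with hc2 | hc2 <;>
      rw [hc2] at hreach <;> norm_num at hreach

/-- Theorem 3 of the paper: with the original benchmark parameter values, the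
Andrews squeezing system has no singular points. -/
theorem benchmark_no_singular_points :
    ¬ ∃ x : Fin 14 → ℝ,
      IsSingularAndrews (7/1000) (7/250) (7/200) (1/50) (1/25) (1/50) (1/25)
        (-727/20000) (3273/100000) (-3467/50000) (-227/100000) x := by
  rintro ⟨x, hp, hrank⟩
  obtain ⟨l, hl, hker⟩ := exists_ne_zero_vecMul_eq_zero_of_rank_lt _ (by rwa [Fintype.card_fin])
  exact hl (benchmark_multipliers_eq_zero x l hp hker)
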